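/- arXiv:1205.2580 — 7 statements merged into one kernel-verified Lean document; each statement's English description precedes it below -/
import Mathlib

section
/- Let V be a real vector space and let I₁, I₂ : V → V be linear endomorphisms satisfying I₁ ∘ I₁ = -id, I₂ ∘ I₂ = -id, and I₁ ∘ I₂ + I₂ ∘ I₁ = (2p) • id for a real number p with p² > 1. Define S := (2·√(p²-1))⁻¹ • (I₁ ∘ I₂ - I₂ ∘ I₁) and T := I₁ ∘ S. Then S ∘ S = id, T ∘ T = id, I₁ ∘ S = -S ∘ I₁, T = I₁ ∘ S, I₁ ∘ T = -T ∘ I₁, and S ∘ T = -T ∘ S; that is, (I₁, S, T) satisfy the almost para-hypercomplex relations. -/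
/-! The commutator `D = I₁I₂ - I₂I₁` anticommutes with `I₁` because `I₁²` is central, and
`D² = (I₁I₂ + I₂I₁)² - 2(I₁I₂²I₁ + I₂I₁²I₂) = 4p² - 4`. Hence `S = D / (2√(p²-1))` squares to the
identity and anticommutes with `I₁`, and `T = I₁S` then squares to `-I₁²S² = 1` and anticommutes with
both `I₁` and `S`. -/

def Anticommute {R : Type*} [Mul R] [Neg R] (a b : R) : Prop := a * b = -(b * a)

namespace Anticommute

variable {R : Type*} [Ring R] {a b : R}

theorem symm (h : Anticommute a b) : Anticommute b a := by
  rw [Anticommute, h, neg_neg]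

theorem mul_self_mul (h : Anticommute a b) : a * b * (a * b) = -(a * a * (b * b)) := by
  rw [mul_assoc, ← mul_assoc b, h.symm]; noncomm_ring

theorem self_mul_right (h : Anticommute a b) : Anticommute a (a * b) := by
  rw [Anticommute, mul_assoc, h.symm, mul_neg, neg_neg]

theorem mul_right_self (h : Anticommute a b) : Anticommute b (a * b) := by
  rw [Anticommute, ← mul_assoc, h.symm, neg_mul]

theorem smul_right {𝕜 : Type*} [CommSemiring 𝕜] [Algebra 𝕜 R] (h : Anticommute a b) (c : 𝕜) :
    Anticommute a (c • b) := by
  rw [Anticommute, mul_smul_comm, h, smul_mul_assoc, smul_neg]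

end Anticommute

section Commutator

variable {R : Type*} [Ring R] {I J : R}

theorem anticommute_commutator_of_mul_self_eq_neg_one (hI : I * I = -1) :
    Anticommute I (I * J - J * I) := by
  have hIIJ : I * (I * J) = -J := by rw [← mul_assoc, hI, neg_one_mul]
  have hJII : J * I * I = -J := by rw [mul_assoc, hI, mul_neg_one]
  rw [Anticommute, mul_sub, sub_mul, hIIJ, hJII, mul_assoc]; abel

theorem commutator_mul_self {𝕜 : Type*} [CommRing 𝕜] [Algebra 𝕜 R] {p : 𝕜}
    (hI : I * I = -1) (hJ : J * J = -1) (hIJ : I * J + J * I = (2 * p) • 1) :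
    (I * J - J * I) * (I * J - J * I) = (4 * (p ^ 2 - 1)) • 1 := by
  have : (I * J - J * I) * (I * J - J * I)
      = (I * J + J * I) * (I * J + J * I) - (I * (J * J) * I + J * (I * I) * J)
        - (I * (J * J) * I + J * (I * I) * J) := by
    noncomm_ring
  rw [this, hIJ, hI, hJ, smul_mul_smul_comm, mul_neg_one, mul_neg_one, neg_mul, neg_mul, hI, hJ,
    one_mul, neg_neg]
  module

end Commutator

/-- Forward direction of Proposition 2: two complex structures `I₁, I₂` with
`I₁I₂ + I₂I₁ = 2p·Id`, `p² > 1`, produce an almost para-hypercomplex triple. -/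
theorem stmt_0 (V : Type*) [AddCommGroup V] [Module ℝ V]
    (I₁ I₂ : V →ₗ[ℝ] V) (p : ℝ) (hp : 1 < p ^ 2)
    (h₁ : I₁ ∘ₗ I₁ = -LinearMap.id)
    (h₂ : I₂ ∘ₗ I₂ = -LinearMap.id)
    (hanti : I₁ ∘ₗ I₂ + I₂ ∘ₗ I₁ = (2 * p) • (LinearMap.id : V →ₗ[ℝ] V))
    (S T : V →ₗ[ℝ] V)
    (hS : S = (2 * Real.sqrt (p ^ 2 - 1))⁻¹ • (I₁ ∘ₗ I₂ - I₂ ∘ₗ I₁))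
    (hT : T = I₁ ∘ₗ S) :
    S ∘ₗ S = LinearMap.id ∧ T ∘ₗ T = LinearMap.id ∧
      I₁ ∘ₗ S = -(S ∘ₗ I₁) ∧ T = I₁ ∘ₗ S ∧
      I₁ ∘ₗ T = -(T ∘ₗ I₁) ∧ S ∘ₗ T = -(T ∘ₗ S) := by
  simp only [← Module.End.mul_eq_comp, ← Module.End.one_eq_id] at *
  have hpos : 0 < p ^ 2 - 1 := by linarith
  have hscale : (2 * √(p ^ 2 - 1))⁻¹ * (2 * √(p ^ 2 - 1))⁻¹ * (4 * (p ^ 2 - 1)) = 1 := by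
    have hsqrt : √(p ^ 2 - 1) ^ 2 = p ^ 2 - 1 := Real.sq_sqrt hpos.le
    have : √(p ^ 2 - 1) ≠ 0 := (Real.sqrt_pos.2 hpos).ne'
    field_simp
    linarith
  have hSS : S * S = 1 := by
    rw [hS, smul_mul_smul_comm, commutator_mul_self h₁ h₂ hanti, smul_smul, hscale, one_smul]
  have hIS : Anticommute I₁ S :=
    hS ▸ (anticommute_commutator_of_mul_self_eq_neg_one h₁).smul_right _
  refine ⟨hSS, ?_, hIS, hT, hT ▸ hIS.self_mul_right, hT ▸ hIS.mul_right_self⟩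
  rw [hT, hIS.mul_self_mul, h₁, hSS]
  exact neg_neg _
end

section
/- Let V be a real vector space and let I, S, T : V → V be linear endomorphisms satisfying the almost para-hypercomplex relations I ∘ I = -id, S ∘ S = id, and T = I ∘ S = -S ∘ I. Let p be a real number with p² > 1 and define I₂ := -(p • I) - √(p²-1) • T. Then I₂ ∘ I₂ = -id, I ∘ I₂ + I₂ ∘ I = (2p) • id, and I ∘ I₂ - I₂ ∘ I = (2·√(p²-1)) • S. -/
/-!
Expanding `J = -p I - q T` with `q² = p² - 1`, everything reduces to the multiplication table
`I T = -S`, `T I = S`, `T T = 1` of the para-quaternions: `I` and `T` anticommute, so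
`J² = p² I² + q² T² = -p² + q² = -1`, while `I J ± J I` only sees `I² = -1` resp. `I T - T I = -2 S`.
-/

structure IsAlmostParaHypercomplex {A : Type*} [Ring A] (I S T : A) : Prop where
  mul_self_I : I * I = -1
  mul_self_S : S * S = 1
  T_eq_mul : T = I * S
  T_eq_neg_mul : T = -(S * I)

namespace IsAlmostParaHypercomplex

section Ring

variable {A : Type*} [Ring A] {I S T : A}

theorem I_mul_T (h : IsAlmostParaHypercomplex I S T) : I * T = -S := by
  rw [h.T_eq_mul, ← mul_assoc, h.mul_self_I, neg_one_mul]

theorem T_mul_I (h : IsAlmostParaHypercomplex I S T) : T * I = S := by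
  rw [h.T_eq_neg_mul, neg_mul, mul_assoc, h.mul_self_I, mul_neg_one, neg_neg]

theorem mul_self_T (h : IsAlmostParaHypercomplex I S T) : T * T = 1 := by
  calc T * T = T * I * S := by rw [mul_assoc, ← h.T_eq_mul]
    _ = 1 := by rw [h.T_mul_I, h.mul_self_S]

end Ring

section Algebra

variable {R A : Type*} [CommRing R] [Ring A] [Algebra R A] {I S T : A}

theorem mul_self_neg_smul_sub_smul (h : IsAlmostParaHypercomplex I S T) {p q : R}
    (hq : q * q = p ^ 2 - 1) :
    (-(p • I) - q • T) * (-(p • I) - q • T) = -1 := by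
  simp only [sub_mul, mul_sub, neg_mul, mul_neg, smul_mul_assoc, mul_smul_comm,
    h.mul_self_I, h.I_mul_T, h.T_mul_I, h.mul_self_T]
  linear_combination (norm := module) hq • (1 : A)

theorem mul_add_mul_neg_smul_sub_smul (h : IsAlmostParaHypercomplex I S T) (p q : R) :
    I * (-(p • I) - q • T) + (-(p • I) - q • T) * I = (2 * p) • 1 := by
  simp only [sub_mul, mul_sub, neg_mul, mul_neg, smul_mul_assoc, mul_smul_comm,
    h.mul_self_I, h.I_mul_T, h.T_mul_I]
  module

theorem mul_sub_mul_neg_smul_sub_smul (h : IsAlmostParaHypercomplex I S T) (p q : R) :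
    I * (-(p • I) - q • T) - (-(p • I) - q • T) * I = (2 * q) • S := by
  simp only [sub_mul, mul_sub, neg_mul, mul_neg, smul_mul_assoc, mul_smul_comm,
    h.mul_self_I, h.I_mul_T, h.T_mul_I]
  module

end Algebra

end IsAlmostParaHypercomplex

/-- Converse direction of Proposition 2: from a para-hypercomplex triple `(I, S, T)` one
recovers a second complex structure `I₂ = -pI - √(p²-1)T` with `I I₂ + I₂ I = 2p·Id` and
`I I₂ - I₂ I = 2√(p²-1)·S`. -/
theorem stmt_1 (V : Type*) [AddCommGroup V] [Module ℝ V]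
    (I S T : V →ₗ[ℝ] V)
    (hI : I ∘ₗ I = -LinearMap.id)
    (hS : S ∘ₗ S = LinearMap.id)
    (hT₁ : T = I ∘ₗ S) (hT₂ : T = -(S ∘ₗ I))
    (p : ℝ) (hp : 1 < p ^ 2)
    (I₂ : V →ₗ[ℝ] V)
    (hI₂ : I₂ = -(p • I) - Real.sqrt (p ^ 2 - 1) • T) :
    I₂ ∘ₗ I₂ = -LinearMap.id ∧
      I ∘ₗ I₂ + I₂ ∘ₗ I = (2 * p) • (LinearMap.id : V →ₗ[ℝ] V) ∧
      I ∘ₗ I₂ - I₂ ∘ₗ I = (2 * Real.sqrt (p ^ 2 - 1)) • S := by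
  have h : IsAlmostParaHypercomplex (A := Module.End ℝ V) I S T := ⟨hI, hS, hT₁, hT₂⟩
  have hq : √(p ^ 2 - 1) * √(p ^ 2 - 1) = p ^ 2 - 1 := Real.mul_self_sqrt (by linarith)
  subst hI₂
  exact ⟨h.mul_self_neg_smul_sub_smul hq, h.mul_add_mul_neg_smul_sub_smul p _,
    h.mul_sub_mul_neg_smul_sub_smul p _⟩
end

section
/- Let V be a real vector space and let I₁, I₂ : V → V be linear endomorphisms satisfying I₁ ∘ I₁ = -id, I₂ ∘ I₂ = -id, and I₁ ∘ I₂ + I₂ ∘ I₁ = (2p) • id for a real number p with p² < 1. Define J := (2·√(1-p²))⁻¹ • (I₁ ∘ I₂ - I₂ ∘ I₁). Then J ∘ J = -id and I₁ ∘ J = -J ∘ I₁; that is, I₁ and J are anticommuting complex structures on V (so I₁, J, I₁∘J satisfy the quaternionic relations). -/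
/-!
Since `I₁² = I₂² = -1`, the products `I₁I₂` and `I₂I₁` are mutually inverse, so
`[I₁, I₂]² = (I₁I₂ + I₂I₁)² - 4 = -4(1 - p²)`, and rescaling by `(2√(1 - p²))⁻¹` gives `J² = -1`.
A commutator `[a, b]` anticommutes with `a` whenever `a² = -1`.
-/

section Ring

variable {A : Type*} [Ring A] {a b : A}

theorem lie_mul_self_of_mul_self_eq_neg_one (ha : a * a = -1) (hb : b * b = -1) :
    ⁅a, b⁆ * ⁅a, b⁆ = (a * b + b * a) * (a * b + b * a) - 4 := by
  have hab : a * b * (b * a) = 1 := by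
    rw [mul_assoc, ← mul_assoc b, hb, neg_one_mul, mul_neg, ha, neg_neg]
  have hba : b * a * (a * b) = 1 := by
    rw [mul_assoc, ← mul_assoc a, ha, neg_one_mul, mul_neg, hb, neg_neg]
  calc ⁅a, b⁆ * ⁅a, b⁆
      = (a * b + b * a) * (a * b + b * a) - 2 * (a * b * (b * a) + b * a * (a * b)) := by
        rw [Ring.lie_def]; noncomm_ring
    _ = (a * b + b * a) * (a * b + b * a) - 4 := by rw [hab, hba]; norm_num

theorem mul_lie_eq_neg_lie_mul_of_mul_self_eq_neg_one (ha : a * a = -1) :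
    a * ⁅a, b⁆ = -(⁅a, b⁆ * a) := by
  rw [Ring.lie_def, mul_sub, sub_mul, ← mul_assoc a a, ha, mul_assoc b a a, ha]
  noncomm_ring

theorem lie_mul_self_eq_smul_one {R : Type*} [CommRing R] [Algebra R A] {c : R}
    (ha : a * a = -1) (hb : b * b = -1) (hab : a * b + b * a = c • 1) :
    ⁅a, b⁆ * ⁅a, b⁆ = (c * c - 4) • 1 := by
  rw [lie_mul_self_of_mul_self_eq_neg_one ha hb, hab, smul_mul_smul_comm, one_mul, sub_smul,
    ofNat_smul_eq_nsmul, nsmul_one, Nat.cast_ofNat]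

theorem inv_smul_mul_self_eq_neg_one {K : Type*} [Field K] [Algebra K A] {x : A} {r : K}
    (hr : r ≠ 0) (hx : x * x = -(r * r) • 1) : (r⁻¹ • x) * (r⁻¹ • x) = -1 := by
  rw [smul_mul_smul_comm, hx, smul_smul, ← mul_inv, mul_neg, inv_mul_cancel₀ (mul_ne_zero hr hr),
    neg_smul, one_smul]

end Ring

/-- Remark after Proposition 2: if `I₁I₂ + I₂I₁ = 2p·Id` with `p² < 1`, then
`J = (2√(1-p²))⁻¹ (I₁I₂ - I₂I₁)` is a complex structure anticommuting with `I₁`. -/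
theorem stmt_2 (V : Type*) [AddCommGroup V] [Module ℝ V]
    (I₁ I₂ : V →ₗ[ℝ] V) (p : ℝ) (hp : p ^ 2 < 1)
    (h₁ : I₁ ∘ₗ I₁ = -LinearMap.id)
    (h₂ : I₂ ∘ₗ I₂ = -LinearMap.id)
    (hanti : I₁ ∘ₗ I₂ + I₂ ∘ₗ I₁ = (2 * p) • (LinearMap.id : V →ₗ[ℝ] V))
    (J : V →ₗ[ℝ] V)
    (hJ : J = (2 * Real.sqrt (1 - p ^ 2))⁻¹ • (I₁ ∘ₗ I₂ - I₂ ∘ₗ I₁)) :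
    J ∘ₗ J = -LinearMap.id ∧ I₁ ∘ₗ J = -(J ∘ₗ I₁) := by
  subst hJ
  simp only [← Module.End.mul_eq_comp, ← Module.End.one_eq_id, ← Ring.lie_def] at h₁ h₂ hanti ⊢
  have hs : √(1 - p ^ 2) * √(1 - p ^ 2) = 1 - p ^ 2 := Real.mul_self_sqrt (by linarith)
  have hs₀ : 0 < √(1 - p ^ 2) := Real.sqrt_pos.2 (by linarith)
  refine ⟨inv_smul_mul_self_eq_neg_one (by positivity) ?_, ?_⟩
  · rw [lie_mul_self_eq_smul_one h₁ h₂ hanti]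
    congr 1
    linear_combination 4 * hs
  · rw [mul_smul_comm, smul_mul_assoc, mul_lie_eq_neg_lie_mul_of_mul_self_eq_neg_one h₁, smul_neg]
end

section
/- Let V be a 4-dimensional real vector space and B a symmetric bilinear form on V of signature (2,2), i.e. there exists a basis (e₀, e₁, e₂, e₃) of V with B(eᵢ, eⱼ) = 0 for i ≠ j, B(e₀, e₀) = B(e₁, e₁) = 1 and B(e₂, e₂) = B(e₃, e₃) = -1. Let X, Y ∈ V be linearly independent vectors with B(X, X) = B(Y, Y) = B(X, Y) = 0. Then there exists a linear endomorphism J : V → V with J ∘ J = -id, B(Jx, Jy) = B(x, y) for all x, y ∈ V, and J X = Y. -/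
/-!
`X` and `Y` span a totally isotropic plane of the nondegenerate form `B`. Taking vectors `B`-dual
to `X, Y` and correcting them along `X` and `Y` completes them to a hyperbolic basis
`X, Y, X', Y'`: `B X X' = B Y Y' = 1` and all other pairings vanish. On this basis the map
`X ↦ Y ↦ -X`, `X' ↦ Y' ↦ -X'` squares to `-1` and preserves every pairing.
-/

open Module
open LinearMap (BilinForm)

namespace LinearMap.BilinForm

section CommRing

variable {R M : Type*} [CommRing R] [AddCommGroup M] [Module R M] {B : BilinForm R M}

theorem linearIndependent_of_biorthogonal {ι : Type*} [DecidableEq ι] {x y : ι → M}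
    (h : ∀ i j, B (x i) (y j) = if i = j then 1 else 0) : LinearIndependent R x := by
  rw [linearIndependent_iff']
  intro s g hg i hi
  simpa [map_sum, h, hi] using congr(B $hg (y i))

-- The partner of `f i` is `f (i + 2)`, indices taken mod 4.
def IsHyperbolicFrame (B : BilinForm R M) (f : Fin 4 → M) : Prop :=
  ∀ i j, B (f i) (f j) = if j = i + 2 then 1 else 0

theorem IsHyperbolicFrame.linearIndependent {f : Fin 4 → M} (hf : B.IsHyperbolicFrame f) :
    LinearIndependent R f :=
  linearIndependent_of_biorthogonal (B := B) (y := fun j ↦ f (j + 2)) fun i j ↦ by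
    rw [hf]; simp [eq_comm]

theorem isHyperbolicFrame_of_isSymm (hB : B.IsSymm) {X Y X' Y' : M} (hX : B X X = 0)
    (hY : B Y Y = 0) (hXY : B X Y = 0) (hX' : B X' X' = 0) (hY' : B Y' Y' = 0)
    (hX'Y' : B X' Y' = 0) (hXX' : B X X' = 1) (hYY' : B Y Y' = 1) (hXY' : B X Y' = 0)
    (hYX' : B Y X' = 0) : B.IsHyperbolicFrame ![X, Y, X', Y'] := by
  intro i j
  fin_cases i <;> fin_cases j <;> simp [*] <;> rw [hB.eq] <;> assumption

end CommRing

variable {K V : Type*} [Field K] [AddCommGroup V] [Module K V] {B : BilinForm K V}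

theorem exists_biorthogonal [FiniteDimensional K V] (hB : B.Nondegenerate) {ι : Type*}
    [DecidableEq ι] {x : ι → V} (hx : LinearIndependent K x) :
    ∃ y : ι → V, ∀ i j, B (x i) (y j) = if i = j then 1 else 0 := by
  choose φ hφ using fun j ↦ LinearMap.exists_extend ((Basis.span hx).coord j)
  refine ⟨fun j ↦ (B.flip.toDual hB.flip).symm (φ j), fun i j ↦ ?_⟩
  have hφx : φ j (x i) = if i = j then 1 else 0 := by
    simpa [Basis.span_apply, Finsupp.single_apply] using congr($(hφ j) (Basis.span hx i))
  rw [← hφx, ← B.flip_apply, ← toDual_def hB.flip, LinearEquiv.apply_symm_apply]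

theorem exists_isotropic_partner [NeZero (2 : K)] (hB : B.IsSymm) {X v : V} (hX : B X X = 0)
    (hXv : B X v = 1) :
    ∃ X', B X X' = 1 ∧ B X' X' = 0 ∧ ∀ Y, B Y X = 0 → B Y X' = B Y v := by
  refine ⟨v - (B v v / 2) • X, by simp [hX, hXv], ?_, fun Y hYX ↦ by simp [hYX]⟩
  simp [hX, hXv, hB.eq v X]
  field_simp
  ring

theorem exists_isHyperbolicFrame [FiniteDimensional K V] [NeZero (2 : K)] (hB : B.Nondegenerate)
    (hBs : B.IsSymm) {X Y : V} (hXY : LinearIndependent K ![X, Y]) (hX : B X X = 0)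
    (hY : B Y Y = 0) (hXYo : B X Y = 0) : ∃ X' Y', B.IsHyperbolicFrame ![X, Y, X', Y'] := by
  obtain ⟨y, hy⟩ := exists_biorthogonal hB hXY
  obtain ⟨X', hXX', hX', hYX'⟩ := exists_isotropic_partner hBs hX (by simpa using hy 0 0)
  obtain ⟨W, hYW, hW, hXW⟩ := exists_isotropic_partner hBs hY (by simpa using hy 1 1)
  have hYX : B Y X = 0 := by rw [hBs.eq, hXYo]
  have hXy₁ : B X (y 1) = 0 := by simpa using hy 0 1
  -- correct `W` along the null vector `X` to make it orthogonal to `X'`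
  refine ⟨X', W - B X' W • X,
    isHyperbolicFrame_of_isSymm hBs hX hY hXYo hX' ?_ ?_ hXX' ?_ ?_ ?_⟩
  · simp [hW, hX, hXW _ hXYo, hXy₁, hBs.eq W X]
  · simp [hBs.eq X' X, hXX']
  · simp [hYW, hYX]
  · simp [hXW _ hXYo, hX, hXy₁]
  · simpa [hYX' _ hYX] using hy 1 0

theorem exists_complexStructure_of_isHyperbolicFrame (hdim : finrank K V = 4) {f : Fin 4 → V}
    (hf : B.IsHyperbolicFrame f) :
    ∃ J : V →ₗ[K] V,
      J ∘ₗ J = -LinearMap.id ∧ (∀ x y, B (J x) (J y) = B x y) ∧ J (f 0) = f 1 := by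
  have : FiniteDimensional K V := .of_finrank_pos (by omega)
  let b := basisOfLinearIndependentOfCardEqFinrank hf.linearIndependent (by simp [hdim])
  let J := b.constr K ![f 1, -f 0, f 3, -f 2]
  have hJ : ∀ i, J (f i) = ![f 1, -f 0, f 3, -f 2] i := by
    intro i
    simpa only [b, coe_basisOfLinearIndependentOfCardEqFinrank] using
      b.constr_basis K ![f 1, -f 0, f 3, -f 2] i
  refine ⟨J, b.ext fun i ↦ ?_, fun x y ↦ ?_, hJ 0⟩
  · fin_cases i <;> simp [b, hJ]
  · have : B.compl₁₂ J J = B := ext_basis b fun i j ↦ by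
      fin_cases i <;> fin_cases j <;> simp [b, hJ, hf _ _]
    exact congr($this x y)

end LinearMap.BilinForm

/-- Pointwise existence part of Lemma 6: a split-signature `(2,2)` symmetric bilinear
form on a `4`-dimensional real vector space together with two orthogonal, linearly
independent null vectors `X, Y` admits a compatible complex structure `J` with `JX = Y`. -/
theorem stmt_5 (V : Type*) [AddCommGroup V] [Module ℝ V]
    (B : V →ₗ[ℝ] V →ₗ[ℝ] ℝ) (hsymm : ∀ x y, B x y = B y x)
    (hsig : ∃ e : Module.Basis (Fin 4) ℝ V,
      (∀ i j, i ≠ j → B (e i) (e j) = 0) ∧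
      B (e 0) (e 0) = 1 ∧ B (e 1) (e 1) = 1 ∧
      B (e 2) (e 2) = -1 ∧ B (e 3) (e 3) = -1)
    (X Y : V) (hXY : LinearIndependent ℝ ![X, Y])
    (hX : B X X = 0) (hY : B Y Y = 0) (hXYorth : B X Y = 0) :
    ∃ J : V →ₗ[ℝ] V, J ∘ₗ J = -LinearMap.id ∧
      (∀ x y, B (J x) (J y) = B x y) ∧ J X = Y := by
  obtain ⟨e, horth, h0, h1, h2, h3⟩ := hsig
  have : FiniteDimensional ℝ V := e.finiteDimensional_of_finite
  have hB : B.Nondegenerate :=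
    (LinearMap.BilinForm.iIsOrtho.nondegenerate_iff_not_isOrtho_basis_self B e horth).2
      fun i ↦ by fin_cases i <;> simp [h0, h1, h2, h3]
  obtain ⟨X', Y', hf⟩ :=
    LinearMap.BilinForm.exists_isHyperbolicFrame hB ⟨hsymm⟩ hXY hX hY hXYorth
  exact LinearMap.BilinForm.exists_complexStructure_of_isHyperbolicFrame
    (by simp [finrank_eq_card_basis e]) hf
end

section
/- Let α, β be real numbers and γ, λ, μ be complex numbers satisfying α·|λ|² + γ·λ·conj(μ) + conj(γ)·conj(λ)·μ + β·|μ|² = 0. Define f⁺ := (conj(λ)·α + conj(μ)·γ) + (conj(λ)·conj(γ) + conj(μ)·β) and f⁻ := (conj(λ)·α + conj(μ)·γ) - (conj(λ)·conj(γ) + conj(μ)·β). Then |f⁺|² = |λ - μ|²·(|γ|² - α·β) and |f⁻|² = |λ + μ|²·(|γ|² - α·β). -/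
/-!
The constraint says that `v = (λ, μ)` is isotropic for the Hermitian form `B` with matrix
`[[α, γ], [γ̄, β]]`, and `f^±` are `B((1, ±1), v)`. For a Hermitian form on `ℂ²` one has the
Lagrange-type identity `|B(w, v)|² = B(w, w) B(v, v) - det B · |w₁v₂ - w₂v₁|²`, so isotropy of `v`
leaves `|B(w, v)|² = (|γ|² - αβ) |w₁v₂ - w₂v₁|²`; take `w = (1, ±1)`.
-/

open Complex ComplexConjugate

def hermForm (α β : ℝ) (γ : ℂ) (v w : ℂ × ℂ) : ℂ :=
  α * v.1 * conj w.1 + γ * v.1 * conj w.2 + conj γ * v.2 * conj w.1 + β * v.2 * conj w.2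

theorem hermForm_mul_conj (α β : ℝ) (γ : ℂ) (v w : ℂ × ℂ) :
    hermForm α β γ w v * conj (hermForm α β γ w v) =
      hermForm α β γ w w * hermForm α β γ v v +
        (‖γ‖ ^ 2 - α * β) * ((w.1 * v.2 - w.2 * v.1) * conj (w.1 * v.2 - w.2 * v.1)) := by
  have hγ : (‖γ‖ : ℂ) ^ 2 = γ * conj γ := (mul_conj' γ).symm
  simp only [hermForm, hγ, map_add, map_sub, map_mul, conj_conj, conj_ofReal]
  ring

theorem sq_norm_hermForm_of_isotropic {α β : ℝ} {γ : ℂ} {v : ℂ × ℂ}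
    (hv : hermForm α β γ v v = 0) (w : ℂ × ℂ) :
    ‖hermForm α β γ w v‖ ^ 2 = ‖w.1 * v.2 - w.2 * v.1‖ ^ 2 * (‖γ‖ ^ 2 - α * β) := by
  have h := hermForm_mul_conj α β γ v w
  rw [hv, mul_zero, zero_add, mul_conj', mul_conj', mul_comm] at h
  exact_mod_cast h

/-- Identity from the proof of Theorem 7 (complex torus case): if
`α|λ|² + γλμ̄ + γ̄λ̄μ + β|μ|² = 0` then `|f^±|² = |λ∓μ|²(|γ|² - αβ)` where
`f^± = (λ̄α + μ̄γ) ± (λ̄γ̄ + μ̄β)`. -/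
theorem stmt_7 (α β : ℝ) (γ lam mu : ℂ)
    (h : (α : ℂ) * (‖lam‖ : ℂ) ^ 2 + γ * lam * (starRingEnd ℂ) mu +
      (starRingEnd ℂ) γ * (starRingEnd ℂ) lam * mu + (β : ℂ) * (‖mu‖ : ℂ) ^ 2 = 0)
    (fplus fminus : ℂ)
    (hfp : fplus = ((starRingEnd ℂ) lam * (α : ℂ) + (starRingEnd ℂ) mu * γ) +
      ((starRingEnd ℂ) lam * (starRingEnd ℂ) γ + (starRingEnd ℂ) mu * (β : ℂ)))
    (hfm : fminus = ((starRingEnd ℂ) lam * (α : ℂ) + (starRingEnd ℂ) mu * γ) -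
      ((starRingEnd ℂ) lam * (starRingEnd ℂ) γ + (starRingEnd ℂ) mu * (β : ℂ))) :
    (‖fplus‖) ^ 2 = (‖(lam - mu)‖) ^ 2 * ((‖γ‖) ^ 2 - α * β) ∧
    (‖fminus‖) ^ 2 = (‖(lam + mu)‖) ^ 2 * ((‖γ‖) ^ 2 - α * β) := by
  have hv : hermForm α β γ (lam, mu) (lam, mu) = 0 := by
    rw [← h, hermForm, ← mul_conj', ← mul_conj']
    ring
  have hplus : fplus = hermForm α β γ (1, 1) (lam, mu) := by
    rw [hfp, hermForm]
    ring
  have hminus : fminus = hermForm α β γ (1, -1) (lam, mu) := by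
    rw [hfm, hermForm]
    ring
  constructor
  · rw [hplus, sq_norm_hermForm_of_isotropic hv, ← norm_neg (lam - mu)]
    ring_nf
  · rw [hminus, sq_norm_hermForm_of_isotropic hv]
    ring_nf
end

section
/- Let c₁, c₂ be real numbers with c₂ ≠ 0 and c₁/c₂ irrational, let γ : ℝ → ℝ be a continuous function, and let A₁, A₂ be real numbers such that x·A₁ + y·A₂ = γ(0) - γ(x·c₁ + y·c₂) for all integers x, y. Then A₁·c₂ = A₂·c₁, i.e. the vectors (A₁, A₂) and (c₁, c₂) are proportional. -/
/-!
Put `g z := c₂ (γ 0 - γ z) - A₂ z`. The hypothesis turns into `g (x c₁ + y c₂) = x (A₁ c₂ - A₂ c₁)`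
for all integers `x, y`. For every `x` one can choose `y` so that `x c₁ + y c₂` lies in the compact
interval `[-|c₂|, |c₂|]`, on which the continuous `g` is bounded; hence `x (A₁ c₂ - A₂ c₁)` is
bounded in `x`, which forces `A₁ c₂ = A₂ c₁`.
-/

theorem exists_int_abs_add_int_mul_le {c : ℝ} (hc : c ≠ 0) (a : ℝ) :
    ∃ y : ℤ, |a + y * c| ≤ |c| := by
  refine ⟨-⌊a / c⌋, ?_⟩
  have hfract : a + ((-⌊a / c⌋ : ℤ) : ℝ) * c = c * Int.fract (a / c) := by
    rw [← Int.self_sub_floor]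
    push_cast
    field_simp
    ring
  rw [hfract, abs_mul, Int.abs_fract]
  exact mul_le_of_le_one_right (abs_nonneg c) (Int.fract_lt_one _).le

theorem eq_zero_of_forall_abs_nat_mul_le {K M : ℝ} (h : ∀ n : ℕ, |n * K| ≤ M) : K = 0 := by
  by_contra hK
  have hKpos : 0 < |K| := abs_pos.mpr hK
  obtain ⟨n, hn⟩ := exists_nat_gt (M / |K|)
  have hlt : M < n * |K| := (div_lt_iff₀ hKpos).mp hn
  have hle := h n
  rw [abs_mul, Nat.abs_cast] at hle
  linarith

theorem eq_zero_of_continuous_apply_int_mul_add_int_mul {g : ℝ → ℝ} (hg : Continuous g)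
    {a c K : ℝ} (hc : c ≠ 0) (h : ∀ x y : ℤ, g (x * a + y * c) = x * K) : K = 0 := by
  obtain ⟨M, hM⟩ :=
    (isCompact_closedBall (0 : ℝ) |c|).exists_bound_of_continuousOn hg.continuousOn
  refine eq_zero_of_forall_abs_nat_mul_le (M := M) fun n => ?_
  obtain ⟨y, hy⟩ := exists_int_abs_add_int_mul_le hc (n * a)
  have hmem : (n : ℝ) * a + y * c ∈ Metric.closedBall (0 : ℝ) |c| := by
    rwa [mem_closedBall_zero_iff]
  have hval : g (n * a + y * c) = n * K := by exact_mod_cast h n y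
  simpa only [hval, Real.norm_eq_abs] using hM _ hmem

theorem stmt_11_general (c₁ c₂ : ℝ) (hc₂ : c₂ ≠ 0)
    (γ : ℝ → ℝ) (hγ : Continuous γ) (A₁ A₂ : ℝ)
    (h : ∀ x y : ℤ, (x : ℝ) * A₁ + (y : ℝ) * A₂ = γ 0 - γ ((x : ℝ) * c₁ + (y : ℝ) * c₂)) :
    A₁ * c₂ = A₂ * c₁ := by
  have hg : Continuous fun z => c₂ * (γ 0 - γ z) - A₂ * z := by fun_prop
  have hlattice : ∀ x y : ℤ, c₂ * (γ 0 - γ (x * c₁ + y * c₂)) - A₂ * (x * c₁ + y * c₂) =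
      x * (A₁ * c₂ - A₂ * c₁) := fun x y => by
    rw [← h x y]
    ring
  exact sub_eq_zero.mp (eq_zero_of_continuous_apply_int_mul_add_int_mul hg hc₂ hlattice)

/-- Collinearity claim (Case 1) in the proof of Theorem 12: if
`x·A₁ + y·A₂ = γ(0) - γ(x·c₁ + y·c₂)` for all integers `x, y`, with `γ` continuous,
`c₂ ≠ 0` and `c₁/c₂` irrational, then `(A₁, A₂)` is proportional to `(c₁, c₂)`. -/
theorem stmt_11 (c₁ c₂ : ℝ) (hc₂ : c₂ ≠ 0) (hirr : Irrational (c₁ / c₂))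
    (γ : ℝ → ℝ) (hγ : Continuous γ) (A₁ A₂ : ℝ)
    (h : ∀ x y : ℤ, (x : ℝ) * A₁ + (y : ℝ) * A₂ = γ 0 - γ ((x : ℝ) * c₁ + (y : ℝ) * c₂)) :
    A₁ * c₂ = A₂ * c₁ :=
  stmt_11_general c₁ c₂ hc₂ γ hγ A₁ A₂ h
end

section
/- Let c > 1 and b be real numbers and let f : ℝ → ℂ be differentiable at every point v > 0, satisfying v·(log c)·f'(v) = 2·b·i·f(v) for all v > 0, |f(v)| = 1 for all v > 0, and the invariance f(c·v) = f(v) for all v > 0. Then there exists an integer k such that b = k·π. -/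
open Complex

/-!
The ODE says exactly that `v ↦ f v · exp (-a log v)`, with `a = 2ib / log c`, has zero derivative
on `(0, ∞)`, so `f v = f 1 · exp (a log v)`. At `v = c` this gives `f 1 = f c = f 1 · exp (2ib)`,
and `f 1 ≠ 0` because `|f 1| = 1`; hence `exp (2ib) = 1`.
-/

theorem hasDerivAt_mul_cexp_neg_mul_log_of_mul_deriv_eq {f : ℝ → ℂ} {a : ℂ} {v : ℝ} (hv : 0 < v)
    (hf : DifferentiableAt ℝ f v) (hode : v * deriv f v = a * f v) :
    HasDerivAt (fun x : ℝ => f x * exp (-(a * Real.log x))) 0 v := by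
  have hlog : HasDerivAt (fun x : ℝ => (Real.log x : ℂ)) (v : ℂ)⁻¹ v := by
    simpa using (Real.hasDerivAt_log hv.ne').ofReal_comp
  refine (hf.hasDerivAt.mul (hlog.const_mul a).neg.cexp).congr_deriv ?_
  have hv' : (v : ℂ) ≠ 0 := by exact_mod_cast hv.ne'
  field_simp
  linear_combination exp (-(a * Real.log v)) * hode

theorem eq_mul_cexp_mul_log_of_mul_deriv_eq {f : ℝ → ℂ} {a : ℂ}
    (hdiff : ∀ v : ℝ, 0 < v → DifferentiableAt ℝ f v)
    (hode : ∀ v : ℝ, 0 < v → v * deriv f v = a * f v) {v : ℝ} (hv : 0 < v) :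
    f v = f 1 * exp (a * Real.log v) := by
  set g : ℝ → ℂ := fun x => f x * exp (-(a * Real.log x))
  have hg : ∀ x ∈ Set.Ioi (0 : ℝ), HasDerivAt g 0 x := fun x hx =>
    hasDerivAt_mul_cexp_neg_mul_log_of_mul_deriv_eq hx (hdiff x hx) (hode x hx)
  have hgv : g v = g 1 := isOpen_Ioi.is_const_of_deriv_eq_zero isPreconnected_Ioi
    (fun x hx => (hg x hx).differentiableAt.differentiableWithinAt)
    (fun x hx => (hg x hx).deriv) hv (Set.mem_Ioi.mpr one_pos)
  simp only [g, Real.log_one, ofReal_zero, mul_zero, neg_zero, exp_zero, mul_one] at hgv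
  rw [← hgv, mul_assoc, ← exp_add, neg_add_cancel, exp_zero, mul_one]

theorem exists_int_eq_mul_pi_of_cexp_two_mul_I_eq_one {b : ℝ} (h : exp (2 * b * I) = 1) :
    ∃ k : ℤ, b = k * Real.pi := by
  obtain ⟨k, hk⟩ := exp_eq_one_iff.mp h
  refine ⟨k, ?_⟩
  have : ((b : ℂ) - k * Real.pi) * (2 * I) = 0 := by linear_combination hk
  have := (mul_eq_zero.mp this).resolve_right (by simp)
  exact_mod_cast sub_eq_zero.mp this

/-- Concluding step of the proof of Theorem 12: a unimodular solution of the ODE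
`v·ln c·f'(v) = 2ib·f(v)` which is invariant under `v ↦ c·v` forces `b = kπ` for some
integer `k`. -/
theorem stmt_13 (c b : ℝ) (hc : 1 < c) (f : ℝ → ℂ)
    (hdiff : ∀ v : ℝ, 0 < v → DifferentiableAt ℝ f v)
    (hode : ∀ v : ℝ, 0 < v →
      (v : ℂ) * (Real.log c : ℂ) * deriv f v = 2 * (b : ℂ) * Complex.I * f v)
    (hmod : ∀ v : ℝ, 0 < v → ‖f v‖ = 1)
    (hinv : ∀ v : ℝ, 0 < v → f (c * v) = f v) :
    ∃ k : ℤ, b = (k : ℝ) * Real.pi := by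
  have hlog : (Real.log c : ℂ) ≠ 0 := by exact_mod_cast (Real.log_pos hc).ne'
  have hode' (v : ℝ) (hv : 0 < v) : v * deriv f v = 2 * b * I / Real.log c * f v := by
    rw [div_mul_eq_mul_div, eq_div_iff hlog, ← hode v hv]
    ring
  have hf1 : f 1 ≠ 0 := norm_ne_zero_iff.mp (by simp [hmod 1 one_pos])
  have hfc : f c = f 1 * exp (2 * b * I) := by
    rw [eq_mul_cexp_mul_log_of_mul_deriv_eq hdiff hode' (by linarith), div_mul_cancel₀ _ hlog]
  refine exists_int_eq_mul_pi_of_cexp_two_mul_I_eq_one (mul_left_cancel₀ hf1 ?_)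
  rw [← hfc, mul_one, ← hinv 1 one_pos, mul_one]
end
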